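/- Assume the DCBM latent-position structure with θ_min = min_i θ_i and n_max = max_k n_k. Let {t_i} ∈ {1,…,K}^n be an assignment with all clusters nonempty, let C_ℓ be the average of the U_i with t_i = ℓ, set Q = Σ_{i=1}^n ‖U_i − C_{t_i}‖², and let T = {i : ‖U_i − C_{t_i}‖² ≤ θ_min²/(3 n_max)}. Suppose that any two indices i, j ∈ T lying in the same community (τ_i = τ_j) satisfy C_{t_i} = C_{t_j}. Then Q ≥ (1/n_max) Σ_{k=1}^K Σ_{i: τ_i = k} (θ_i − θ̄_k)² − 3Q/θ_min², where θ̄_k is the average of θ_i over 𝒢_k. -/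

import Mathlib

/-!
Project `U i - C (t i)` onto the unit row `H (τ i)`. Since `θ i = s_k θt i` with
`s_k = ‖φ_k‖` and `s_k² ≤ n_max`, this gives, for `k = τ i`,
`(θ i - s_k ⟪C (t i), H k⟫)² ≤ n_max ‖U i - C (t i)‖²`.
Replacing the mean of `θ` over a community by any reference value `a_k` only increases
the within-community sum of squares; take for `a_k` the common value of
`s_k ⟪C (t j), H k⟫` over the members `j ∈ T` of the community. Each `i ∈ T` then
contributes at most `n_max ‖U i - C (t i)‖²`. Every other `i` contributes at most `1`,
as `a_k` lies within `θ_min` of some `θ j ∈ [θ_min, 1]`, and off `T` we have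
`1 < 3 n_max ‖U i - C (t i)‖² / θ_min²`.
-/

open Finset Matrix

/-- The centroid of the points `V i` assigned to cluster `k` by the assignment `t`. -/
noncomputable def centroid {n K d : ℕ} (t : Fin n → Fin K)
    (V : Fin n → EuclideanSpace ℝ (Fin d)) (k : Fin K) : EuclideanSpace ℝ (Fin d) :=
  (((Finset.univ.filter fun i => t i = k).card : ℝ))⁻¹ •
    ∑ i ∈ Finset.univ.filter (fun i => t i = k), V i

lemma sum_sq_sub_mean_le {ι : Type*} (A : Finset ι) (f : ι → ℝ) (a : ℝ) :
    ∑ i ∈ A, (f i - (∑ j ∈ A, f j) / #A) ^ 2 ≤ ∑ i ∈ A, (f i - a) ^ 2 := by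
  rcases A.eq_empty_or_nonempty with rfl | hA
  · simp
  set m := (∑ j ∈ A, f j) / #A
  have hcard : (0 : ℝ) < #A := by exact_mod_cast hA.card_pos
  have hsum : ∑ j ∈ A, f j = #A * m := (mul_div_cancel₀ _ hcard.ne').symm
  have expand : ∀ c : ℝ, ∑ i ∈ A, (f i - c) ^ 2
      = ∑ i ∈ A, f i ^ 2 - 2 * c * ∑ i ∈ A, f i + #A * c ^ 2 := fun c => by
    simp only [sub_sq, sum_add_distrib, sum_sub_distrib, ← sum_mul, ← mul_sum, sum_const,
      nsmul_eq_mul]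
    ring
  rw [expand, expand, hsum]
  nlinarith [mul_nonneg hcard.le (sq_nonneg (a - m))]

lemma sq_sub_le_one_of_abs_sub_le {m x y a : ℝ} (hx : m ≤ x ∧ x ≤ 1)
    (hy : m ≤ y ∧ y ≤ 1) (ha : |a - y| ≤ m) : (x - a) ^ 2 ≤ 1 := by
  rw [sq_le_one_iff_abs_le_one, abs_le]
  rw [abs_le] at ha
  constructor <;> linarith

lemma div_le_add_of_le_one_of_le_mul {x D N m : ℝ} (hN : 0 < N) (hm : 0 < m) (hD : 0 ≤ D)
    (hx : x ≤ 1) (hsmall : D ≤ m ^ 2 / (3 * N) → x ≤ N * D) :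
    x / N ≤ D + 3 * D / m ^ 2 := by
  have hD' : 0 ≤ 3 * D / m ^ 2 := by positivity
  by_cases hDs : D ≤ m ^ 2 / (3 * N)
  · have : x / N ≤ D := by rw [div_le_iff₀ hN, mul_comm]; exact hsmall hDs
    linarith
  · have hlarge : 1 / N < 3 * D / m ^ 2 := by
      rw [not_le, div_lt_iff₀ (by positivity)] at hDs
      rw [lt_div_iff₀ (by positivity)]
      field_simp at hDs ⊢
      linarith
    have : x / N ≤ 1 / N := by gcongr
    linarith

section Clustering

variable {ι κ : Type*} [Fintype ι] [Fintype κ] [DecidableEq κ]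

noncomputable def withinClusterSumSq (τ : ι → κ) (f : ι → ℝ) : ℝ :=
  ∑ k, ∑ i ∈ univ.filter (fun i => τ i = k),
    (f i - (∑ j ∈ univ.filter (fun l => τ l = k), f j) / #(univ.filter fun l => τ l = k)) ^ 2

lemma withinClusterSumSq_le (τ : ι → κ) (f : ι → ℝ) (a : κ → ℝ) :
    withinClusterSumSq τ f ≤ ∑ i, (f i - a (τ i)) ^ 2 := by
  rw [← sum_fiberwise univ τ]
  refine sum_le_sum fun k _ => (sum_sq_sub_mean_le _ f (a k)).trans_eq ?_
  exact sum_congr rfl fun i hi => by rw [(mem_filter.1 hi).2]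

lemma one_div_mul_withinClusterSumSq_le (τ : ι → κ) {θ D b : ι → ℝ} {m N : ℝ}
    (hm : 0 < m) (hN : 0 < N) (hθ : ∀ i, m ≤ θ i ∧ θ i ≤ 1)
    (hb : ∀ i, (θ i - b i) ^ 2 ≤ N * D i)
    (hb_const : ∀ i j, D i ≤ m ^ 2 / (3 * N) → D j ≤ m ^ 2 / (3 * N) → τ i = τ j →
      b i = b j) :
    1 / N * withinClusterSumSq τ θ ≤ ∑ i, D i + 3 * (∑ i, D i) / m ^ 2 := by
  classical
  have hD : ∀ i, 0 ≤ D i := fun i =>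
    nonneg_of_mul_nonneg_right ((sq_nonneg _).trans (hb i)) hN
  -- compare each cluster with the common estimate of its small-error members instead of its mean
  let a : κ → ℝ := fun k =>
    if h : ∃ j, τ j = k ∧ D j ≤ m ^ 2 / (3 * N) then b h.choose else m
  have ha_small : ∀ i, D i ≤ m ^ 2 / (3 * N) → a (τ i) = b i := by
    intro i hi
    have h : ∃ j, τ j = τ i ∧ D j ≤ m ^ 2 / (3 * N) := ⟨i, rfl, hi⟩
    simp only [a, dif_pos h]
    exact hb_const _ _ h.choose_spec.2 hi h.choose_spec.1
  have ha_le_one : ∀ i, (θ i - a (τ i)) ^ 2 ≤ 1 := by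
    intro i
    by_cases h : ∃ j, τ j = τ i ∧ D j ≤ m ^ 2 / (3 * N)
    · obtain ⟨j, hj, hjs⟩ := h
      refine sq_sub_le_one_of_abs_sub_le (hθ i) (hθ j) ?_
      rw [← hj, ha_small j hjs, abs_sub_comm]
      refine abs_le_of_sq_le_sq ((hb j).trans ?_) hm.le
      calc N * D j ≤ N * (m ^ 2 / (3 * N)) := by gcongr
        _ ≤ m ^ 2 := by field_simp; nlinarith [sq_nonneg m]
    · simp only [a, dif_neg h]
      exact sq_sub_le_one_of_abs_sub_le (hθ i) ⟨le_rfl, (hθ i).1.trans (hθ i).2⟩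
        (by simpa using hm.le)
  calc 1 / N * withinClusterSumSq τ θ ≤ 1 / N * ∑ i, (θ i - a (τ i)) ^ 2 := by
        gcongr; exact withinClusterSumSq_le τ θ a
    _ = ∑ i, (θ i - a (τ i)) ^ 2 / N := by rw [mul_sum]; simp only [one_div_mul_eq_div]
    _ ≤ ∑ i, (D i + 3 * D i / m ^ 2) := by
        refine sum_le_sum fun i _ => div_le_add_of_le_one_of_le_mul hN hm (hD i) (ha_le_one i) ?_
        intro hi
        rw [ha_small i hi]
        exact hb i
    _ = ∑ i, D i + 3 * (∑ i, D i) / m ^ 2 := by rw [sum_add_distrib, mul_sum, sum_div]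

end Clustering

lemma sq_sub_inner_le_norm_smul_sub_sq {E : Type*} [NormedAddCommGroup E]
    [InnerProductSpace ℝ E] {e : E} (he : ‖e‖ = 1) (r : ℝ) (c : E) :
    (r - inner ℝ c e) ^ 2 ≤ ‖r • e - c‖ ^ 2 := by
  have h : inner ℝ (r • e - c) e = r - inner ℝ c e := by
    rw [inner_sub_left, real_inner_smul_left, real_inner_self_eq_norm_sq, he, one_pow, mul_one]
  rw [← h, ← sq_abs]
  gcongr
  simpa [he] using abs_real_inner_le_norm (r • e - c) e

lemma norm_toLp_row_eq_one {m : Type*} [Fintype m] [DecidableEq m] {H : Matrix m m ℝ}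
    (hH : H * Hᵀ = 1) (k : m) : ‖WithLp.toLp 2 (H k)‖ = 1 := by
  have h := congrFun (congrFun hH k) k
  simp only [mul_apply, transpose_apply, one_apply_eq, ← sq] at h
  simp [EuclideanSpace.norm_eq, h]

theorem stmt8_general {n K : ℕ} (hn : 0 < n) (τ : Fin n → Fin K)
    (θ : Fin n → ℝ) (hθ : ∀ i, θ i ∈ Set.Ioc (0 : ℝ) 1)
    (H : Matrix (Fin K) (Fin K) ℝ) (hH : H * Hᵀ = 1)
    (θt : Fin n → ℝ)
    (hθt : ∀ i, θt i =
      θ i / Real.sqrt (∑ j ∈ Finset.univ.filter (fun l => τ l = τ i), θ j ^ 2))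
    (U : Fin n → EuclideanSpace ℝ (Fin K))
    (hU : ∀ i, U i = θt i • (WithLp.equiv 2 (Fin K → ℝ)).symm (H (τ i)))
    (θmin : ℝ) (hθmin : θmin = ⨅ i, θ i)
    (nmax : ℕ) (hnmax : nmax = Finset.univ.sup fun k => (Finset.univ.filter fun i => τ i = k).card)
    (t : Fin n → Fin K)
    (C : Fin K → EuclideanSpace ℝ (Fin K))
    (Q : ℝ) (hQ : Q = ∑ i, ‖U i - C (t i)‖ ^ 2)
    (hT : ∀ i j : Fin n,
      ‖U i - C (t i)‖ ^ 2 ≤ θmin ^ 2 / (3 * nmax) →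
      ‖U j - C (t j)‖ ^ 2 ≤ θmin ^ 2 / (3 * nmax) →
      τ i = τ j → C (t i) = C (t j)) :
    (1 / (nmax : ℝ)) *
        (∑ k : Fin K, ∑ i ∈ Finset.univ.filter (fun i => τ i = k),
          (θ i - (∑ j ∈ Finset.univ.filter (fun l => τ l = k), θ j) /
              ((Finset.univ.filter fun l => τ l = k).card : ℝ)) ^ 2)
      - 3 * Q / θmin ^ 2 ≤ Q := by
  have : Nonempty (Fin n) := ⟨⟨0, hn⟩⟩
  obtain ⟨i₀, hi₀⟩ := exists_eq_ciInf_of_finite (f := θ)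
  have hθmin_le : ∀ i, θmin ≤ θ i := fun i =>
    hθmin ▸ ciInf_le (Set.finite_range θ).bddBelow i
  have hθmin_pos : 0 < θmin := hθmin ▸ hi₀ ▸ (hθ i₀).1
  have hcard : ∀ k, #(univ.filter fun i => τ i = k) ≤ nmax := fun k =>
    hnmax ▸ le_sup (f := fun k => #(univ.filter fun i => τ i = k)) (mem_univ k)
  have hN : (0 : ℝ) < nmax := by
    have h : 0 < #(univ.filter fun i => τ i = τ i₀) := card_pos.2 ⟨i₀, by simp⟩
    exact_mod_cast h.trans_le (hcard _)
  set s : Fin K → ℝ := fun k => √(∑ j ∈ univ.filter (fun l => τ l = k), θ j ^ 2)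
  have hs_sq : ∀ k, s k ^ 2 ≤ nmax := by
    intro k
    rw [Real.sq_sqrt (sum_nonneg fun j _ => sq_nonneg _)]
    refine (sum_le_card_nsmul _ _ 1 fun j _ => ?_).trans ?_
    · exact pow_le_one₀ (hθ j).1.le (hθ j).2
    · simpa using hcard k
  have hθ_eq : ∀ i, θ i = s (τ i) * θt i := by
    intro i
    have hs : 0 < s (τ i) := Real.sqrt_pos.2 <| (pow_pos (hθ i).1 2).trans_le <|
      single_le_sum (fun j _ => sq_nonneg (θ j)) (mem_filter.2 ⟨mem_univ i, rfl⟩)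
    rw [hθt i, mul_div_cancel₀ _ hs.ne']
  have key := one_div_mul_withinClusterSumSq_le τ (D := fun i => ‖U i - C (t i)‖ ^ 2)
    (b := fun i => s (τ i) * inner ℝ (C (t i)) (WithLp.toLp 2 (H (τ i))))
    hθmin_pos hN (fun i => ⟨hθmin_le i, (hθ i).2⟩) ?_ ?_
  · rw [← hQ] at key
    unfold withinClusterSumSq at key
    linarith
  · intro i
    rw [hθ_eq i, hU i, ← mul_sub, mul_pow]
    exact mul_le_mul (hs_sq _)
      (sq_sub_inner_le_norm_smul_sub_sq (norm_toLp_row_eq_one hH _) _ _) (sq_nonneg _) hN.le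
  · intro i j hi hj hij
    simp only [hij, hT i j hi hj hij]

/-- DCBM latent-position structure; `{t_i}` an assignment with all clusters
nonempty, `C_ℓ` the average of the `U_i` with `t_i = ℓ`, `Q = Σ_i ‖U_i − C_{t_i}‖²`, and
`T = {i : ‖U_i − C_{t_i}‖² ≤ θ_min²/(3 n_max)}`.  If any two members of `T` from the same
community share the same centroid, then
`Q ≥ (1/n_max) Σ_k Σ_{i : τ_i = k} (θ_i − θ̄_k)² − 3Q/θ_min²`. -/
theorem stmt8 {n K : ℕ} (hn : 0 < n) (τ : Fin n → Fin K) (hτ : Function.Surjective τ)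
    (θ : Fin n → ℝ) (hθ : ∀ i, θ i ∈ Set.Ioc (0 : ℝ) 1)
    (H : Matrix (Fin K) (Fin K) ℝ) (hH : H * Hᵀ = 1)
    (θt : Fin n → ℝ)
    (hθt : ∀ i, θt i =
      θ i / Real.sqrt (∑ j ∈ Finset.univ.filter (fun l => τ l = τ i), θ j ^ 2))
    (U : Fin n → EuclideanSpace ℝ (Fin K))
    (hU : ∀ i, U i = θt i • (WithLp.equiv 2 (Fin K → ℝ)).symm (H (τ i)))
    (θmin : ℝ) (hθmin : θmin = ⨅ i, θ i)
    (nmax : ℕ) (hnmax : nmax = Finset.univ.sup fun k => (Finset.univ.filter fun i => τ i = k).card)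
    (t : Fin n → Fin K) (ht : Function.Surjective t)
    (C : Fin K → EuclideanSpace ℝ (Fin K)) (hC : ∀ l, C l = centroid t U l)
    (Q : ℝ) (hQ : Q = ∑ i, ‖U i - C (t i)‖ ^ 2)
    (hT : ∀ i j : Fin n,
      ‖U i - C (t i)‖ ^ 2 ≤ θmin ^ 2 / (3 * nmax) →
      ‖U j - C (t j)‖ ^ 2 ≤ θmin ^ 2 / (3 * nmax) →
      τ i = τ j → C (t i) = C (t j)) :
    (1 / (nmax : ℝ)) *
        (∑ k : Fin K, ∑ i ∈ Finset.univ.filter (fun i => τ i = k),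
          (θ i - (∑ j ∈ Finset.univ.filter (fun l => τ l = k), θ j) /
              ((Finset.univ.filter fun l => τ l = k).card : ℝ)) ^ 2)
      - 3 * Q / θmin ^ 2 ≤ Q :=
  stmt8_general hn τ θ hθ H hH θt hθt U hU θmin hθmin nmax hnmax t C Q hQ hT
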